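/- arXiv:1810.06829 — 2 statements merged into one kernel-verified Lean document; each statement's English description precedes it below -/
import Mathlib

section
/- For every n ≥ 1 and every x ∈ [0,1], the modified Durrmeyer operator satisfies D_n^{M,1}(e_0; x) = 2a_0(n) + a_1(n), where e_0(t) = 1. -/
open Filter Topology

/-- Bernstein basis polynomial `p_{n,k}(x)`, zero when `k < 0` or `k > n`. -/
noncomputable def bern (n : ℕ) (k : ℤ) (x : ℝ) : ℝ :=
  if 0 ≤ k ∧ k ≤ (n : ℤ) then (n.choose k.toNat : ℝ) * x ^ k.toNat * (1 - x) ^ (n - k.toNat)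
  else 0

/-- Modified Bernstein basis `p_{n,k}^{M,1}(x)` of Khosravian-Arab et al. -/
noncomputable def pM1 (a0 a1 : ℕ → ℝ) (n : ℕ) (k : ℤ) (x : ℝ) : ℝ :=
  (a1 n * x + a0 n) * bern (n - 1) k x + (a1 n * (1 - x) + a0 n) * bern (n - 1) (k - 1) x

/-- First-order modified Durrmeyer operator `D_n^{M,1}(f;x)`. -/
noncomputable def DM1 (a0 a1 : ℕ → ℝ) (n : ℕ) (f : ℝ → ℝ) (x : ℝ) : ℝ :=
  ((n : ℝ) + 1) * ∑ k ∈ Finset.range (n + 1),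
    pM1 a0 a1 n k x * ∫ t in (0:ℝ)..1, bern n k t * f t

/-!
Over `k`, both `bern (n - 1) k x` and its shift `bern (n - 1) (k - 1) x` sum to `1`, so the
weights `pM1 a0 a1 n k x` sum to `(a1 x + a0) + (a1 (1 - x) + a0) = 2 a0 + a1`. Every Bernstein
polynomial of degree `n` has integral `1 / (n + 1)` over `[0, 1]`: for `ν < n`,
integrating `B'_{n+1,ν+1} = (n + 1) (B_{n,ν} - B_{n,ν+1})`, where `B_{n+1,ν+1}` vanishes at `0`
and `1`, shows that all these integrals coincide, and they add up to `∫ 1 = 1`.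
-/

open Polynomial Finset

theorem bern_natCast_eq_eval (n k : ℕ) (x : ℝ) :
    bern n k x = (bernsteinPolynomial ℝ n k).eval x := by
  rcases le_or_gt k n with hk | hk
  · rw [bern, if_pos ⟨by positivity, by exact_mod_cast hk⟩]
    simp [bernsteinPolynomial]
  · rw [bern, if_neg (by omega), bernsteinPolynomial.eq_zero_of_lt ℝ hk, eval_zero]

theorem bern_neg_one (n : ℕ) (x : ℝ) : bern n (-1) x = 0 :=
  if_neg (by omega)

theorem sum_bern (n : ℕ) (x : ℝ) : ∑ k ∈ range (n + 1), bern n k x = 1 := by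
  simpa [bern_natCast_eq_eval, eval_finsetSum] using
    congrArg (eval x) (bernsteinPolynomial.sum ℝ n)

theorem sum_range_add_two_bern (n : ℕ) (x : ℝ) : ∑ k ∈ range (n + 2), bern n k x = 1 := by
  rw [sum_range_succ, sum_bern, bern_natCast_eq_eval,
    bernsteinPolynomial.eq_zero_of_lt ℝ (by omega), eval_zero, add_zero]

theorem sum_range_add_two_bern_sub_one (n : ℕ) (x : ℝ) :
    ∑ k ∈ range (n + 2), bern n ((k : ℤ) - 1) x = 1 := by
  rw [sum_range_succ']
  simpa [bern_neg_one] using sum_bern n x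

theorem sum_pM1 (a0 a1 : ℕ → ℝ) {n : ℕ} (hn : 1 ≤ n) (x : ℝ) :
    ∑ k ∈ range (n + 1), pM1 a0 a1 n k x = 2 * a0 n + a1 n := by
  obtain ⟨m, rfl⟩ := Nat.exists_eq_add_of_le' hn
  simp only [pM1, Nat.add_sub_cancel, sum_add_distrib, ← mul_sum, sum_range_add_two_bern,
    sum_range_add_two_bern_sub_one]
  ring

theorem integral_bernsteinPolynomial_succ {n ν : ℕ} (h : ν < n) :
    ∫ x in (0 : ℝ)..1, (bernsteinPolynomial ℝ n (ν + 1)).eval x =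
      ∫ x in (0 : ℝ)..1, (bernsteinPolynomial ℝ n ν).eval x := by
  have hFTC := intervalIntegral.integral_eq_sub_of_hasDerivAt
    (fun x _ => (bernsteinPolynomial ℝ (n + 1) (ν + 1)).hasDerivAt x)
    ((Polynomial.continuous _).intervalIntegrable 0 1)
  have hint (μ : ℕ) : IntervalIntegrable (fun x => (bernsteinPolynomial ℝ n μ).eval x)
      MeasureTheory.volume 0 1 :=
    (Polynomial.continuous _).intervalIntegrable 0 1
  rw [bernsteinPolynomial.eval_at_0, bernsteinPolynomial.eval_at_1, if_neg (by omega),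
    if_neg (by omega), sub_zero] at hFTC
  simp only [bernsteinPolynomial.derivative_succ_aux, eval_mul, eval_sub, eval_add, eval_natCast,
    eval_one, intervalIntegral.integral_const_mul,
    intervalIntegral.integral_sub (hint _) (hint _)] at hFTC
  have hn : (n : ℝ) + 1 ≠ 0 := by positivity
  exact (sub_eq_zero.mp ((mul_eq_zero.mp hFTC).resolve_left hn)).symm

theorem integral_bernsteinPolynomial_eq_integral_zero {n ν : ℕ} (h : ν ≤ n) :
    ∫ x in (0 : ℝ)..1, (bernsteinPolynomial ℝ n ν).eval x =
      ∫ x in (0 : ℝ)..1, (bernsteinPolynomial ℝ n 0).eval x := by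
  induction ν with
  | zero => rfl
  | succ ν ih => rw [integral_bernsteinPolynomial_succ h, ih (by omega)]

theorem integral_bernsteinPolynomial {n ν : ℕ} (h : ν ≤ n) :
    ∫ x in (0 : ℝ)..1, (bernsteinPolynomial ℝ n ν).eval x = 1 / ((n : ℝ) + 1) := by
  have hsum :
      ∑ μ ∈ range (n + 1), ∫ x in (0 : ℝ)..1, (bernsteinPolynomial ℝ n μ).eval x = 1 := by
    rw [← intervalIntegral.integral_finsetSum
      (fun _ _ => (Polynomial.continuous _).intervalIntegrable 0 1)]
    simp [← eval_finsetSum, bernsteinPolynomial.sum]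
  rw [sum_congr rfl fun μ hμ =>
    integral_bernsteinPolynomial_eq_integral_zero (Nat.lt_succ_iff.mp (mem_range.mp hμ))] at hsum
  rw [integral_bernsteinPolynomial_eq_integral_zero h]
  simp only [sum_const, card_range, nsmul_eq_mul] at hsum
  rw [eq_div_iff (by positivity), mul_comm]
  exact_mod_cast hsum

theorem integral_bern {n k : ℕ} (hk : k ≤ n) :
    ∫ t in (0 : ℝ)..1, bern n k t = 1 / ((n : ℝ) + 1) := by
  simp only [bern_natCast_eq_eval]
  exact integral_bernsteinPolynomial hk

theorem DM1_moment_e0_general (a0 a1 : ℕ → ℝ) (n : ℕ) (hn : 1 ≤ n) (x : ℝ) :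
    DM1 a0 a1 n (fun _ => 1) x = 2 * a0 n + a1 n := by
  have hmoment : ∀ k ∈ range (n + 1),
      pM1 a0 a1 n k x * ∫ t in (0 : ℝ)..1, bern n k t * 1 = pM1 a0 a1 n k x / ((n : ℝ) + 1) :=
    fun k hk => by
      simp only [mul_one, integral_bern (Nat.lt_succ_iff.mp (mem_range.mp hk)), mul_one_div]
  rw [DM1, sum_congr rfl hmoment, ← sum_div, sum_pM1 a0 a1 hn]
  field_simp

theorem DM1_moment_e0 (a0 a1 : ℕ → ℝ) (n : ℕ) (hn : 1 ≤ n)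
    (x : ℝ) (hx : x ∈ Set.Icc (0:ℝ) 1) :
    DM1 a0 a1 n (fun _ => 1) x = 2 * a0 n + a1 n :=
  DM1_moment_e0_general a0 a1 n hn x
end

section
/- There exists a constant C > 0 such that for all n ≥ 4 and all x ∈ [0,1], the fourth central moment of the second-order modified Durrmeyer operator satisfies |D̃_n^{M,2}((t − x)^4; x) + 12x^2(1−x)^2 n^2/((n+2)(n+3)(n+4)(n+5))| ≤ C/n^3. -/
open Filter Topology

/-- Second-order modified Bernstein basis `p̃_{n,k}^{M,2}(x)`. -/
noncomputable def pM2 (n : ℕ) (k : ℤ) (x : ℝ) : ℝ :=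
  (((n : ℝ) - 2) * x ^ 2 - (n : ℝ) * x + 3 / 2) * bern (n - 2) k x
    + 2 * ((n : ℝ) - 2) * x * (1 - x) * bern (n - 2) (k - 1) x
    + (((n : ℝ) - 2) * x ^ 2 - ((n : ℝ) - 4) * x - 1 / 2) * bern (n - 2) (k - 2) x

/-- Second-order modified Durrmeyer operator `D̃_n^{M,2}(f;x)`. -/
noncomputable def DM2 (n : ℕ) (f : ℝ → ℝ) (x : ℝ) : ℝ :=
  ((n : ℝ) + 1) * ∑ k ∈ Finset.range (n + 1),
    pM2 n k x * ∫ t in (0:ℝ)..1, bern n k t * f t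

/-! The Durrmeyer weights are Beta integrals: `(n+1) ∫₀¹ p_{n,k}(t) t^j dt = (k+1)^(j) / (n+2)^(j)`
(rising factorials). Expanding `(t - x)^4` binomially therefore reduces the fourth central moment
to the sums `∑ₖ p̃_{n,k}(x) C(k+j, j)`, `j ≤ 4`. The three-term shape of `p̃_{n,k}` turns these into
Bernstein sums `∑ₘ p_{n-2,m}(x) C(m+r, j)`, which Vandermonde's identity and
`∑ₘ p_{N,m}(x) C(m, i) = C(N, i) x^i` evaluate exactly. The outcome is a closed rational
expression in `n` and `X = x(1-x)` whose leading part is `-12 X² n² / ((n+2)(n+3)(n+4)(n+5))`;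
the remainder is `O(n) / n⁴` uniformly because `0 ≤ X ≤ 1/4`. -/

open Finset intervalIntegral Nat

lemma integral_pow_mul_one_sub_pow_succ (a b : ℕ) :
    (a + 1 : ℝ) * ∫ t in (0:ℝ)..1, t ^ a * (1 - t) ^ (b + 1)
      = (b + 1) * ∫ t in (0:ℝ)..1, t ^ (a + 1) * (1 - t) ^ b := by
  have hderiv : ∀ t ∈ Set.uIcc (0:ℝ) 1, HasDerivAt (fun t : ℝ => t ^ (a + 1) * (1 - t) ^ (b + 1))
      ((a + 1) * (t ^ a * (1 - t) ^ (b + 1)) - (b + 1) * (t ^ (a + 1) * (1 - t) ^ b)) t := by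
    intro t _
    refine ((hasDerivAt_pow (a + 1) t).fun_mul
      (((hasDerivAt_id t).const_sub 1).fun_pow (b + 1))).congr_deriv ?_
    simp only [id, Nat.cast_add, Nat.cast_one, Nat.add_sub_cancel]
    ring
  have hftc := integral_eq_sub_of_hasDerivAt hderiv
    ((by fun_prop : Continuous _).intervalIntegrable _ _)
  rw [integral_sub ((by fun_prop : Continuous _).intervalIntegrable _ _)
    ((by fun_prop : Continuous _).intervalIntegrable _ _), integral_const_mul, integral_const_mul]
    at hftc
  simp only [one_pow, sub_self, zero_pow (succ_ne_zero _), mul_zero, sub_zero] at hftc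
  linarith

theorem integral_pow_mul_one_sub_pow (a b : ℕ) :
    ∫ t in (0:ℝ)..1, t ^ a * (1 - t) ^ b = a ! * b ! / (a + b + 1)! := by
  induction b generalizing a with
  | zero =>
    simp only [pow_zero, mul_one, integral_pow, add_zero, factorial_succ]
    push_cast
    field_simp
    simp
  | succ b ih =>
    have h := integral_pow_mul_one_sub_pow_succ a b
    rw [ih, show a + 1 + b + 1 = a + (b + 1) + 1 by omega] at h
    rw [← mul_right_inj' (by positivity : (a + 1 : ℝ) ≠ 0), h]
    push_cast [factorial_succ]
    ring

lemma bern_natCast {n k : ℕ} (hk : k ≤ n) (x : ℝ) :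
    bern n k x = n.choose k * x ^ k * (1 - x) ^ (n - k) := by
  simp [bern, hk]

lemma bern_eq_zero {n : ℕ} {k : ℤ} (hk : k < 0 ∨ n < k) (x : ℝ) : bern n k x = 0 := by
  rw [bern, if_neg]
  omega

lemma mul_integral_bern_mul_pow {n k : ℕ} (hk : k ≤ n) (j : ℕ) :
    (n + 1 : ℝ) * ∫ t in (0:ℝ)..1, bern n k t * t ^ j
      = (k + 1).ascFactorial j / (n + 2).ascFactorial j := by
  have hint : (fun t => bern n k t * t ^ j)
      = fun t => (n.choose k : ℝ) * (t ^ (k + j) * (1 - t) ^ (n - k)) := by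
    funext t
    rw [bern_natCast hk]
    ring
  rw [hint, integral_const_mul, integral_pow_mul_one_sub_pow,
    show k + j + (n - k) + 1 = (n + 1) + j by omega, cast_choose ℝ hk]
  have hk' : ((k + j)! : ℝ) = k ! * (k + 1).ascFactorial j := by
    exact_mod_cast (factorial_mul_ascFactorial k j).symm
  have hn' : ((n + 1 + j)! : ℝ) = (n + 1)! * (n + 2).ascFactorial j := by
    exact_mod_cast (factorial_mul_ascFactorial (n + 1) j).symm
  have hpos : (0 : ℝ) < (n + 2).ascFactorial j := by exact_mod_cast ascFactorial_pos _ _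
  rw [hk', hn']
  push_cast [factorial_succ]
  field_simp

lemma continuous_bern (n : ℕ) (k : ℤ) : Continuous (bern n k) := by
  unfold bern
  split_ifs <;> fun_prop

lemma mul_integral_bern_mul_sub_pow {n k : ℕ} (hk : k ≤ n) (r : ℕ) (x : ℝ) :
    (n + 1 : ℝ) * ∫ t in (0:ℝ)..1, bern n k t * (t - x) ^ r
      = ∑ j ∈ range (r + 1),
          (-x) ^ (r - j) * r.choose j * ((k + 1).ascFactorial j / (n + 2).ascFactorial j) := by
  have hexpand : (fun t => bern n k t * (t - x) ^ r)
      = fun t => ∑ j ∈ range (r + 1), (-x) ^ (r - j) * r.choose j * (bern n k t * t ^ j) := by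
    funext t
    rw [sub_eq_add_neg, add_pow, mul_sum]
    exact sum_congr rfl fun j _ => by ring
  have hcont (j : ℕ) : Continuous fun t => (-x) ^ (r - j) * r.choose j * (bern n k t * t ^ j) := by
    have := continuous_bern n k
    fun_prop
  rw [hexpand, integral_finsetSum fun j _ => (hcont j).intervalIntegrable _ _, mul_sum]
  refine sum_congr rfl fun j _ => ?_
  rw [integral_const_mul, ← mul_integral_bern_mul_pow hk]
  ring

lemma DM2_sub_pow (n r : ℕ) (x : ℝ) :
    DM2 n (fun t => (t - x) ^ r) x
      = ∑ j ∈ range (r + 1), (-x) ^ (r - j) * r.choose j / (n + 2).ascFactorial j *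
          ∑ k ∈ range (n + 1), pM2 n k x * (k + 1).ascFactorial j := by
  have hterm : ∀ k ∈ range (n + 1),
      (n + 1 : ℝ) * (pM2 n k x * ∫ t in (0:ℝ)..1, bern n k t * (t - x) ^ r)
      = ∑ j ∈ range (r + 1), (-x) ^ (r - j) * r.choose j / (n + 2).ascFactorial j *
          (pM2 n k x * (k + 1).ascFactorial j) := by
    intro k hk
    rw [mul_left_comm, mul_integral_bern_mul_sub_pow (mem_range_succ_iff.1 hk), mul_sum]
    exact sum_congr rfl fun j _ => by ring
  rw [DM2, mul_sum, sum_congr rfl hterm, sum_comm]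
  simp only [mul_sum]

lemma sum_bern_sub_mul {N s L : ℕ} (hL : N + s < L) (x : ℝ) (g : ℕ → ℝ) :
    ∑ k ∈ range L, bern N ((k : ℤ) - s) x * g k
      = ∑ m ∈ range (N + 1), bern N m x * g (m + s) := by
  rw [show L = s + ((N + 1) + (L - s - (N + 1))) by omega, sum_range_add, sum_range_add]
  have hlow : ∑ k ∈ range s, bern N ((k : ℤ) - s) x * g k = 0 :=
    sum_eq_zero fun k hk => by rw [bern_eq_zero (by rw [mem_range] at hk; omega), zero_mul]
  have hhigh : ∑ l ∈ range (L - s - (N + 1)),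
      bern N (((s + ((N + 1) + l) : ℕ) : ℤ) - s) x * g (s + ((N + 1) + l)) = 0 :=
    sum_eq_zero fun l _ => by rw [bern_eq_zero (by omega), zero_mul]
  rw [hlow, hhigh, zero_add, add_zero]
  refine sum_congr rfl fun m _ => ?_
  rw [add_comm s m]
  push_cast
  rw [add_sub_cancel_right]

lemma sum_pM2_mul {n : ℕ} (hn : 2 ≤ n) (x : ℝ) (g : ℕ → ℝ) :
    ∑ k ∈ range (n + 1), pM2 n k x * g k
      = ∑ m ∈ range (n - 2 + 1), bern (n - 2) m x *
          ((((n : ℝ) - 2) * x ^ 2 - n * x + 3 / 2) * g m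
            + 2 * ((n : ℝ) - 2) * x * (1 - x) * g (m + 1)
            + (((n : ℝ) - 2) * x ^ 2 - ((n : ℝ) - 4) * x - 1 / 2) * g (m + 2)) := by
  set a := ((n : ℝ) - 2) * x ^ 2 - n * x + 3 / 2
  set b := 2 * ((n : ℝ) - 2) * x * (1 - x)
  set c := ((n : ℝ) - 2) * x ^ 2 - ((n : ℝ) - 4) * x - 1 / 2
  have hsplit : ∀ k : ℕ, pM2 n k x * g k
      = a * (bern (n - 2) ((k : ℤ) - (0 : ℕ)) x * g k)
        + b * (bern (n - 2) ((k : ℤ) - (1 : ℕ)) x * g k)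
        + c * (bern (n - 2) ((k : ℤ) - (2 : ℕ)) x * g k) := by
    intro k
    simp only [pM2, a, b, c, cast_zero, cast_one, cast_ofNat, sub_zero]
    ring
  rw [sum_congr rfl fun k _ => hsplit k, sum_add_distrib, sum_add_distrib, ← mul_sum, ← mul_sum,
    ← mul_sum, sum_bern_sub_mul (by omega), sum_bern_sub_mul (by omega),
    sum_bern_sub_mul (by omega), mul_sum, mul_sum, mul_sum, ← sum_add_distrib,
    ← sum_add_distrib]
  exact sum_congr rfl fun m _ => by rw [add_zero]; ring

lemma sum_bern_mul_choose (N i : ℕ) (x : ℝ) :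
    ∑ m ∈ range (N + 1), bern N m x * m.choose i = N.choose i * x ^ i := by
  rcases lt_or_ge N i with hNi | hiN
  · rw [choose_eq_zero_of_lt hNi, cast_zero, zero_mul]
    exact sum_eq_zero fun m hm => by
      rw [choose_eq_zero_of_lt (by rw [mem_range] at hm; omega), cast_zero, mul_zero]
  rw [show N + 1 = i + (N - i + 1) by omega, sum_range_add, sum_eq_zero fun m hm => by
    rw [choose_eq_zero_of_lt (by simpa using hm), cast_zero, mul_zero], zero_add]
  have hterm : ∀ l ∈ range (N - i + 1), bern N ↑(i + l) x * ((i + l).choose i : ℕ)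
      = N.choose i * x ^ i * (x ^ l * (1 - x) ^ (N - i - l) * (N - i).choose l) := by
    intro l hl
    have hchoose : (N.choose (i + l) * (i + l).choose i : ℝ) = N.choose i * (N - i).choose l := by
      exact_mod_cast (choose_mul (le_add_right i l)).trans (by rw [Nat.add_sub_cancel_left])
    rw [bern_natCast (by rw [mem_range] at hl; omega), show N - (i + l) = N - i - l by omega, pow_add]
    linear_combination x ^ i * x ^ l * (1 - x) ^ (N - i - l) * hchoose
  rw [sum_congr rfl hterm, ← mul_sum, ← add_pow, add_sub_cancel, one_pow, mul_one]

lemma sum_bern_mul_add_choose (N r j : ℕ) (x : ℝ) :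
    ∑ m ∈ range (N + 1), bern N m x * (m + r).choose j
      = ∑ i ∈ range (j + 1), r.choose (j - i) * N.choose i * x ^ i := by
  have hvandermonde (m : ℕ) :
      ((m + r).choose j : ℝ) = ∑ i ∈ range (j + 1), (m.choose i : ℝ) * r.choose (j - i) := by
    rw [add_choose_eq, Nat.sum_antidiagonal_eq_sum_range_succ (fun i k => m.choose i * r.choose k)]
    push_cast
    rfl
  simp only [hvandermonde, mul_sum]
  rw [sum_comm]
  refine sum_congr rfl fun i _ => ?_
  rw [mul_assoc, ← sum_bern_mul_choose N i x, mul_sum]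
  exact sum_congr rfl fun m _ => by ring

lemma sum_pM2_mul_ascFactorial {n : ℕ} (hn : 2 ≤ n) (j : ℕ) (x : ℝ) :
    ∑ k ∈ range (n + 1), pM2 n k x * (k + 1).ascFactorial j
      = j ! * ∑ i ∈ range (j + 1), (n - 2).choose i * x ^ i *
          ((((n : ℝ) - 2) * x ^ 2 - n * x + 3 / 2) * j.choose (j - i)
            + 2 * ((n : ℝ) - 2) * x * (1 - x) * (j + 1).choose (j - i)
            + (((n : ℝ) - 2) * x ^ 2 - ((n : ℝ) - 4) * x - 1 / 2) * (j + 2).choose (j - i)) := by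
  simp only [ascFactorial_eq_factorial_mul_choose, cast_mul]
  rw [sum_pM2_mul hn]
  set a := ((n : ℝ) - 2) * x ^ 2 - n * x + 3 / 2
  set b := 2 * ((n : ℝ) - 2) * x * (1 - x)
  set c := ((n : ℝ) - 2) * x ^ 2 - ((n : ℝ) - 4) * x - 1 / 2
  have hsplit : ∀ m : ℕ, bern (n - 2) m x * (a * (j ! * (m + j).choose j)
      + b * (j ! * (m + 1 + j).choose j) + c * (j ! * (m + 2 + j).choose j))
      = j ! * (a * (bern (n - 2) m x * (m + j).choose j)
        + b * (bern (n - 2) m x * (m + (j + 1)).choose j)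
        + c * (bern (n - 2) m x * (m + (j + 2)).choose j)) := by
    intro m
    simp only [add_assoc, add_comm 1 j, add_comm 2 j]
    ring
  rw [sum_congr rfl fun m _ => hsplit m, ← mul_sum, sum_add_distrib, sum_add_distrib, ← mul_sum,
    ← mul_sum, ← mul_sum, sum_bern_mul_add_choose, sum_bern_mul_add_choose,
    sum_bern_mul_add_choose, mul_sum, mul_sum, mul_sum, ← sum_add_distrib, ← sum_add_distrib]
  exact congrArg _ (sum_congr rfl fun i _ => by ring)

lemma cast_choose_eq_prod_div (N i : ℕ) :
    (N.choose i : ℝ) = (∏ l ∈ range i, ((N : ℝ) - l)) / i ! := by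
  rw [eq_div_iff (by positivity), prod_range_natCast_sub, ← descFactorial_eq_prod_range,
    descFactorial_eq_factorial_mul_choose, cast_mul, mul_comm]

lemma cast_ascFactorial_eq_prod (N j : ℕ) :
    (N.ascFactorial j : ℝ) = ∏ l ∈ range j, ((N : ℝ) + l) := by
  rw [ascFactorial_eq_prod_range]
  push_cast
  rfl

theorem DM2_sub_pow_four {n : ℕ} (hn : 2 ≤ n) (x : ℝ) :
    DM2 n (fun t => (t - x) ^ 4) x
      = (-12 * n ^ 2 * (x * (1 - x)) ^ 2 + 12 * n * (x * (1 - x)) * (59 * (x * (1 - x)) - 13)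
          - 3888 * (x * (1 - x)) ^ 2 + 1572 * (x * (1 - x)) - 144)
        / ((n + 2) * (n + 3) * (n + 4) * (n + 5)) := by
  have hN : ((n - 2 : ℕ) : ℝ) = n - 2 := by rw [cast_sub hn, cast_ofNat]
  simp only [DM2_sub_pow, sum_pM2_mul_ascFactorial hn]
  simp only [cast_choose_eq_prod_div, hN,
    cast_ascFactorial_eq_prod, sum_range_succ, sum_range_zero, prod_range_succ, prod_range_zero]
  norm_num [Nat.choose, factorial]
  field_simp
  ring

lemma mul_one_sub_mem_Icc {x : ℝ} (hx : x ∈ Set.Icc (0 : ℝ) 1) :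
    x * (1 - x) ∈ Set.Icc (0 : ℝ) (1 / 4) := by
  obtain ⟨hx0, hx1⟩ := hx
  constructor <;> nlinarith [sq_nonneg (x - 1 / 2)]

lemma abs_fourth_moment_remainder_le {n X : ℝ} (hn : 4 ≤ n) (hX : X ∈ Set.Icc (0 : ℝ) (1 / 4)) :
    |12 * n * X * (59 * X - 13) - 3888 * X ^ 2 + 1572 * X - 144| ≤ 75 * n := by
  obtain ⟨hX0, hX1⟩ := hX
  have hnX : 0 ≤ n * X := by nlinarith
  rw [abs_le]
  constructor <;> nlinarith [mul_le_mul_of_nonneg_left hX1 hnX]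

lemma pow_four_le_prod {n : ℝ} (hn : 0 ≤ n) : n ^ 4 ≤ (n + 2) * (n + 3) * (n + 4) * (n + 5) := by
  nlinarith [pow_nonneg hn 3, pow_nonneg hn 2]

theorem DM2_fourth_central_moment_asymptotics :
    ∃ C > (0:ℝ), ∀ n : ℕ, 4 ≤ n → ∀ x ∈ Set.Icc (0:ℝ) 1,
      |DM2 n (fun t => (t - x) ^ 4) x
          + 12 * x ^ 2 * (1 - x) ^ 2 * (n : ℝ) ^ 2
            / (((n : ℝ) + 2) * ((n : ℝ) + 3) * ((n : ℝ) + 4) * ((n : ℝ) + 5))|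
        ≤ C / (n : ℝ) ^ 3 := by
  refine ⟨75, by norm_num, fun n hn x hx => ?_⟩
  have hn' : (4 : ℝ) ≤ n := by exact_mod_cast hn
  have hprod : (0 : ℝ) < (n + 2) * (n + 3) * (n + 4) * (n + 5) := by positivity
  rw [DM2_sub_pow_four (by omega), ← add_div, abs_div, abs_of_pos hprod]
  calc _ = |12 * (n : ℝ) * (x * (1 - x)) * (59 * (x * (1 - x)) - 13) - 3888 * (x * (1 - x)) ^ 2
          + 1572 * (x * (1 - x)) - 144| / (((n : ℝ) + 2) * (n + 3) * (n + 4) * (n + 5)) := by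
        congr 2; ring
    _ ≤ 75 * n / (n : ℝ) ^ 4 :=
        div_le_div₀ (by positivity) (abs_fourth_moment_remainder_le hn' (mul_one_sub_mem_Icc hx))
          (by positivity) (pow_four_le_prod (by positivity))
    _ = 75 / (n : ℝ) ^ 3 := by field_simp
end
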